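/- Let k ≥ 987 be a squarefree odd integer with k ≥ (log x_2)^{7/5} where x_2 > exp(exp(30)). If q_1 > q_2 > ... > q_l are the prime factors of k, then the product prod_{j=1}^{l} (q_j - 1)/(q_j - 2) < 1.51479 * (e^{gamma} log log k + 5/(2 log log k)), assuming phi(k) > k/(e^{gamma} log log k + 5/(2 log log k)) and prod over all primes p of (p-1)^2/(p(p-2)) restricted to primes dividing k is at most prod_{p odd prime} (p-1)^2/(p(p-2)) < 1.51479. -/

import Mathlib

open Real

/-! Since `(q - 1)/(q - 2) = q/(q - 1) · (q - 1)²/(q(q - 2))` and `k` is squarefree, the product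
splits as `k/φ(k)` times the product of `(q - 1)²/(q(q - 2))`; the first factor is below
`e^γ log log k + 5/(2 log log k)` by the assumed lower bound for `φ(k)`, the second below
`1.51479`. -/

theorem Nat.three_le_of_mem_primeFactors_of_odd {n p : ℕ} (hn : Odd n)
    (hp : p ∈ n.primeFactors) : 3 ≤ p := by
  have hpo : Odd p := hn.of_dvd_nat (Nat.dvd_of_mem_primeFactors hp)
  have := (Nat.prime_of_mem_primeFactors hp).two_le
  rcases hpo with ⟨m, rfl⟩
  omega

theorem Squarefree.natCast_totient_eq_prod_primeFactors {R : Type*} [CommRing R] {n : ℕ}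
    (hn : Squarefree n) : (n.totient : R) = ∏ p ∈ n.primeFactors, ((p : R) - 1) := by
  have hφ : n.totient = ∏ p ∈ n.primeFactors, (p - 1) := by
    rw [Nat.totient_eq_div_primeFactors_mul, Nat.prod_primeFactors_of_squarefree hn,
      Nat.div_self hn.ne_zero.bot_lt, one_mul]
  rw [hφ, Nat.cast_prod]
  refine Finset.prod_congr rfl fun p hp => ?_
  rw [Nat.cast_sub (Nat.prime_of_mem_primeFactors hp).one_le, Nat.cast_one]

theorem sub_one_div_sub_two_eq {K : Type*} [Field K] {x : K} (h₀ : x ≠ 0) (h₁ : x - 1 ≠ 0)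
    (h₂ : x - 2 ≠ 0) : (x - 1) / (x - 2) = x / (x - 1) * ((x - 1) ^ 2 / (x * (x - 2))) := by
  field_simp

theorem Squarefree.prod_primeFactors_sub_one_div_sub_two {k : ℕ} (hsf : Squarefree k)
    (hodd : Odd k) :
    ∏ p ∈ k.primeFactors, ((p : ℝ) - 1) / ((p : ℝ) - 2) =
      (k / k.totient : ℝ) *
        ∏ p ∈ k.primeFactors, ((p : ℝ) - 1) ^ 2 / ((p : ℝ) * ((p : ℝ) - 2)) := by
  have hk : (k : ℝ) = ∏ p ∈ k.primeFactors, (p : ℝ) := by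
    rw [← Nat.cast_prod, Nat.prod_primeFactors_of_squarefree hsf]
  rw [hk, hsf.natCast_totient_eq_prod_primeFactors, ← Finset.prod_div_distrib,
    ← Finset.prod_mul_distrib]
  refine Finset.prod_congr rfl fun p hp => ?_
  have hp3 : (3 : ℝ) ≤ p := by exact_mod_cast Nat.three_le_of_mem_primeFactors_of_odd hodd hp
  exact sub_one_div_sub_two_eq (by linarith) (by linarith) (by linarith)

theorem prod_primeFactors_sq_div_pos {k : ℕ} (hodd : Odd k) :
    0 < ∏ p ∈ k.primeFactors, ((p : ℝ) - 1) ^ 2 / ((p : ℝ) * ((p : ℝ) - 2)) := by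
  refine Finset.prod_pos fun p hp => ?_
  have hp3 : (3 : ℝ) ≤ p := by exact_mod_cast Nat.three_le_of_mem_primeFactors_of_odd hodd hp
  have : (0 : ℝ) < p - 2 := by linarith
  have : (0 : ℝ) < p - 1 := by linarith
  positivity

theorem Real.log_log_pos_of_three_le {x : ℝ} (hx : 3 ≤ x) : 0 < log (log x) := by
  refine log_pos ?_
  rw [lt_log_iff_exp_lt (by linarith)]
  linarith [exp_one_lt_three]

theorem prod_ratio_prime_factors_bound_general (k : ℕ)
    (hk : 987 ≤ k) (hsf : Squarefree k) (hodd : Odd k)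
    (hphi : (Nat.totient k : ℝ) >
      (k : ℝ) / (Real.exp Real.eulerMascheroniConstant * Real.log (Real.log k)
        + 5 / (2 * Real.log (Real.log k))))
    (hprod : ∏ p ∈ k.primeFactors, ((p : ℝ) - 1) ^ 2 / ((p : ℝ) * ((p : ℝ) - 2))
      < 1.51479) :
    ∏ p ∈ k.primeFactors, ((p : ℝ) - 1) / ((p : ℝ) - 2) <
      1.51479 * (Real.exp Real.eulerMascheroniConstant * Real.log (Real.log k)
        + 5 / (2 * Real.log (Real.log k))) := by
  set E := Real.exp Real.eulerMascheroniConstant * Real.log (Real.log k)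
    + 5 / (2 * Real.log (Real.log k))
  have hL : 0 < Real.log (Real.log k) :=
    log_log_pos_of_three_le (by exact_mod_cast (by omega : 3 ≤ k))
  have hE : 0 < E := by positivity
  have hφ : (0 : ℝ) < k.totient := by exact_mod_cast Nat.totient_pos.mpr (by omega)
  have hratio : (k / k.totient : ℝ) < E := by
    rw [div_lt_iff₀ hφ]
    rw [gt_iff_lt, div_lt_iff₀ hE] at hphi
    linarith
  rw [hsf.prod_primeFactors_sub_one_div_sub_two hodd, mul_comm (1.51479 : ℝ)]
  exact mul_lt_mul' hratio.le hprod (prod_primeFactors_sq_div_pos hodd).le hE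

theorem prod_ratio_prime_factors_bound (k : ℕ) (x₂ : ℝ)
    (hk : 987 ≤ k) (hsf : Squarefree k) (hodd : Odd k)
    (hx₂ : x₂ > Real.exp (Real.exp 30))
    (hklarge : (k : ℝ) ≥ (Real.log x₂) ^ ((7 : ℝ) / 5))
    (hphi : (Nat.totient k : ℝ) >
      (k : ℝ) / (Real.exp Real.eulerMascheroniConstant * Real.log (Real.log k)
        + 5 / (2 * Real.log (Real.log k))))
    (hprod : ∏ p ∈ k.primeFactors, ((p : ℝ) - 1) ^ 2 / ((p : ℝ) * ((p : ℝ) - 2))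
      < 1.51479) :
    ∏ p ∈ k.primeFactors, ((p : ℝ) - 1) / ((p : ℝ) - 2) <
      1.51479 * (Real.exp Real.eulerMascheroniConstant * Real.log (Real.log k)
        + 5 / (2 * Real.log (Real.log k))) :=
  prod_ratio_prime_factors_bound_general k hk hsf hodd hphi hprod
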